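/- Let n ≥ 1 be an integer and q ∈ [1,∞). For all measurable functions G : ℝⁿ → [0,∞] and g : ℝⁿ → [0,∞], and for every x ∈ ℝⁿ, one has M_q(G ∗ g)(x) ≤ (G ∗ M_q g)(x), where (G ∗ g)(x) = ∫_{ℝⁿ} G(z) g(x−z) dz ∈ [0,∞] and M_q h(x) = sup_{r>0} ( ⨍_{B(x,r)} h(y)^q dy )^{1/q} ∈ [0,∞] for a nonnegative measurable h; all integrals and suprema are interpreted in [0,∞]. -/

import Mathlib

open MeasureTheory Metric Set
open scoped ENNReal NNReal

/-- The `L^q`-variant of the centred Hardy–Littlewood maximal function of a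
nonnegative (extended-real-valued) function `h` on `ℝⁿ`. -/
noncomputable def maximalFn (n : ℕ) (q : ℝ) (h : EuclideanSpace ℝ (Fin n) → ℝ≥0∞)
    (x : EuclideanSpace ℝ (Fin n)) : ℝ≥0∞ :=
  ⨆ (r : ℝ) (_ : 0 < r),
    ((volume (Metric.ball x r))⁻¹ * ∫⁻ y in Metric.ball x r, h y ^ q) ^ (1 / q)

/-!
An average `⨍⁻ y in B, f y ∂μ` is the integral of `f` against the finite measure
`(μ B)⁻¹ • μ.restrict B`, so Minkowski's integral inequality moves the `L^q`-mean over `B(x, r)`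
inside the convolution integral. Translation invariance of Lebesgue measure turns the `L^q`-mean of
`G z * g (· - z)` over `B(x, r)` into `G z` times the `L^q`-mean of `g` over `B(x - z, r)`, which is
at most `G z * M_q g (x - z)`.

Minkowski's inequality is proved by duality: for `ψ ≤ ∫⁻ z, F · z` with `‖ψ‖_q < ∞`, Tonelli and
Hölder give `‖ψ‖_q^q ≤ ‖ψ‖_q^(q-1) * ∫⁻ z, ‖F · z‖_q`; truncating `∫⁻ z, F · z` at height `m`
and letting `m → ∞` removes the finiteness assumption.
-/

theorem ENNReal.rpow_one_div_le_of_le_rpow_one_div_mul {p q : ℝ} (hpq : p.HolderConjugate q)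
    {a b : ℝ≥0∞} (ha : a ≠ ∞) (h : a ≤ a ^ (1 / q) * b) : a ^ (1 / p) ≤ b := by
  rcases eq_or_ne a 0 with rfl | ha₀
  · rw [ENNReal.zero_rpow_of_pos (one_div_pos.2 hpq.pos)]
    exact zero_le
  have hsplit : a ^ (1 / q) * a ^ (1 / p) = a := by
    rw [← ENNReal.rpow_add _ _ ha₀ ha, one_div, one_div, add_comm, hpq.inv_add_inv_eq_one,
      ENNReal.rpow_one]
  refine (ENNReal.mul_le_mul_iff_right ?_ ?_).1 (hsplit.trans_le h)
  · exact (ENNReal.rpow_pos (pos_iff_ne_zero.2 ha₀) ha).ne'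
  · exact ENNReal.rpow_ne_top_of_nonneg (one_div_nonneg.2 hpq.symm.nonneg) ha

section Minkowski

variable {α β : Type*} [MeasurableSpace α] [MeasurableSpace β] {μ : Measure α} {ν : Measure β}
  {q : ℝ} {F : α → β → ℝ≥0∞}

theorem lintegral_rpow_le_of_le_lintegral [SFinite μ] [SFinite ν] (hq : 1 < q)
    (hF : Measurable (Function.uncurry F)) {ψ : α → ℝ≥0∞} (hψ : Measurable ψ)
    (hψF : ∀ y, ψ y ≤ ∫⁻ z, F y z ∂ν) (hψq : ∫⁻ y, ψ y ^ q ∂μ ≠ ∞) :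
    (∫⁻ y, ψ y ^ q ∂μ) ^ (1 / q) ≤ ∫⁻ z, (∫⁻ y, F y z ^ q ∂μ) ^ (1 / q) ∂ν := by
  have hpq : q.HolderConjugate q.conjExponent := .conjExponent hq
  set I := ∫⁻ y, ψ y ^ q ∂μ
  have hHolder (z : β) : ∫⁻ y, ψ y ^ (q - 1) * F y z ∂μ ≤
      I ^ (1 / q.conjExponent) * (∫⁻ y, F y z ^ q ∂μ) ^ (1 / q) := by
    have hI : ∫⁻ y, (ψ y ^ (q - 1)) ^ q.conjExponent ∂μ = I := by
      simp_rw [← ENNReal.rpow_mul, hpq.sub_one_mul_conj]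
      rfl
    have h := ENNReal.lintegral_mul_le_Lp_mul_Lq μ hpq.symm
      (hψ.pow_const (q - 1)).aemeasurable (hF.comp (measurable_prodMk_right (y := z))).aemeasurable
    simp only [Pi.mul_apply, Function.comp_apply, Function.uncurry_apply_pair, hI] at h
    exact h
  refine ENNReal.rpow_one_div_le_of_le_rpow_one_div_mul hpq hψq ?_
  calc I = ∫⁻ y, ψ y ^ (q - 1) * ψ y ∂μ := by
        refine lintegral_congr fun y => ?_
        have h := ENNReal.rpow_add_of_nonneg (x := ψ y) (q - 1) 1 (by linarith) zero_le_one
        rwa [sub_add_cancel, ENNReal.rpow_one] at h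
    _ ≤ ∫⁻ y, ψ y ^ (q - 1) * ∫⁻ z, F y z ∂ν ∂μ := lintegral_mono fun y => by gcongr; exact hψF y
    _ = ∫⁻ y, ∫⁻ z, ψ y ^ (q - 1) * F y z ∂ν ∂μ := lintegral_congr fun y =>
        (lintegral_const_mul _ (hF.comp measurable_prodMk_left)).symm
    _ = ∫⁻ z, ∫⁻ y, ψ y ^ (q - 1) * F y z ∂μ ∂ν := lintegral_lintegral_swap
        (((hψ.comp measurable_fst).pow_const _).mul hF).aemeasurable
    _ ≤ ∫⁻ z, I ^ (1 / q.conjExponent) * (∫⁻ y, F y z ^ q ∂μ) ^ (1 / q) ∂ν := lintegral_mono hHolder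
    _ = I ^ (1 / q.conjExponent) * ∫⁻ z, (∫⁻ y, F y z ^ q ∂μ) ^ (1 / q) ∂ν :=
        lintegral_const_mul' _ _
          (ENNReal.rpow_ne_top_of_nonneg (one_div_nonneg.2 hpq.symm.nonneg) hψq)

theorem ENNReal.iSup_min_natCast_rpow (a : ℝ≥0∞) (hq : 0 < q) : ⨆ m : ℕ, min a m ^ q = a ^ q := by
  have h := (ENNReal.orderIsoRpow q hq).map_iSup fun m : ℕ => min a m
  simp only [ENNReal.orderIsoRpow_apply] at h
  rw [← h, ← inf_iSup_eq, ENNReal.iSup_natCast, inf_top_eq]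

theorem lintegral_rpow_lintegral_le [IsFiniteMeasure μ] [SFinite ν] (hq : 1 ≤ q)
    (hF : Measurable (Function.uncurry F)) :
    (∫⁻ y, (∫⁻ z, F y z ∂ν) ^ q ∂μ) ^ (1 / q) ≤ ∫⁻ z, (∫⁻ y, F y z ^ q ∂μ) ^ (1 / q) ∂ν := by
  rcases hq.eq_or_lt with rfl | hq
  · simpa using (lintegral_lintegral_swap hF.aemeasurable).le
  have hq₀ : 0 < q := one_pos.trans hq
  have hΦ : Measurable fun y => ∫⁻ z, F y z ∂ν := hF.lintegral_prod_right'
  have htrunc : ∫⁻ y, (∫⁻ z, F y z ∂ν) ^ q ∂μ = ⨆ m : ℕ, ∫⁻ y, min (∫⁻ z, F y z ∂ν) m ^ q ∂μ := by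
    rw [← lintegral_iSup (fun m => (hΦ.min measurable_const).pow_const q) fun i j hij y => ?_]
    · simp only [ENNReal.iSup_min_natCast_rpow _ hq₀]
    · gcongr
  have hroot := (ENNReal.orderIsoRpow (1 / q) (one_div_pos.2 hq₀)).map_iSup
    fun m : ℕ => ∫⁻ y, min (∫⁻ z, F y z ∂ν) m ^ q ∂μ
  simp only [ENNReal.orderIsoRpow_apply] at hroot
  rw [htrunc, hroot]
  refine iSup_le fun m => lintegral_rpow_le_of_le_lintegral hq hF (hΦ.min measurable_const)
    (fun y => min_le_left _ _) (ne_top_of_le_ne_top ?_ (lintegral_mono fun y =>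
      ENNReal.rpow_le_rpow (min_le_right _ (m : ℝ≥0∞)) hq₀.le))
  rw [lintegral_const]
  exact ENNReal.mul_ne_top (ENNReal.rpow_ne_top_of_nonneg hq₀.le (ENNReal.natCast_ne_top m))
    (measure_ne_top μ univ)

end Minkowski

theorem rpow_laverage_mul_rpow {α : Type*} [MeasurableSpace α] (μ : Measure α) {q : ℝ}
    (hq : 0 < q) (c : ℝ≥0∞) {f : α → ℝ≥0∞} (hf : Measurable f) :
    (⨍⁻ y, (c * f y) ^ q ∂μ) ^ (1 / q) = c * (⨍⁻ y, f y ^ q ∂μ) ^ (1 / q) := by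
  simp_rw [laverage_eq', ENNReal.mul_rpow_of_nonneg _ _ hq.le]
  rw [lintegral_const_mul _ (hf.pow_const q), ENNReal.mul_rpow_of_nonneg _ _ (by positivity),
    one_div, ENNReal.rpow_rpow_inv hq.ne']

theorem setLAverage_ball_comp_sub_right {E : Type*} [SeminormedAddCommGroup E] [MeasurableSpace E]
    [MeasurableAdd E] (μ : Measure E) [μ.IsAddRightInvariant] (f : E → ℝ≥0∞) (x z : E) (r : ℝ) :
    ⨍⁻ y in ball x r, f (y - z) ∂μ = ⨍⁻ y in ball (x - z) r, f y ∂μ := by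
  have hpre : (· - z) ⁻¹' ball (x - z) r = ball x r := by
    ext y
    simp [dist_eq_norm]
  have hmp := measurePreserving_sub_right μ z
  rw [setLAverage_eq, setLAverage_eq, ← hpre,
    hmp.setLIntegral_comp_preimage_emb (measurableEmbedding_subRight z),
    hmp.measure_preimage_emb (measurableEmbedding_subRight z)]

theorem maximalFn_eq_iSup_setLAverage (n : ℕ) (q : ℝ) (h : EuclideanSpace ℝ (Fin n) → ℝ≥0∞)
    (x : EuclideanSpace ℝ (Fin n)) :
    maximalFn n q h x = ⨆ (r : ℝ) (_ : 0 < r), (⨍⁻ y in ball x r, h y ^ q ∂volume) ^ (1 / q) := by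
  simp only [maximalFn, setLAverage_eq, ENNReal.div_eq_inv_mul]

theorem statement5 (n : ℕ) (q : ℝ) (hq : 1 ≤ q)
    (G g : EuclideanSpace ℝ (Fin n) → ℝ≥0∞) (hG : Measurable G) (hg : Measurable g)
    (x : EuclideanSpace ℝ (Fin n)) :
    maximalFn n q (fun w => ∫⁻ z, G z * g (w - z)) x ≤
      ∫⁻ z, G z * maximalFn n q g (x - z) := by
  have hF : Measurable (Function.uncurry fun (y z : EuclideanSpace ℝ (Fin n)) => G z * g (y - z)) :=
    (hG.comp measurable_snd).mul (hg.comp (measurable_fst.sub measurable_snd))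
  rw [maximalFn_eq_iSup_setLAverage]
  refine iSup₂_le fun r hr => ?_
  calc (⨍⁻ y in ball x r, (∫⁻ z, G z * g (y - z)) ^ q ∂volume) ^ (1 / q)
      ≤ ∫⁻ z, (⨍⁻ y in ball x r, (G z * g (y - z)) ^ q ∂volume) ^ (1 / q) :=
        lintegral_rpow_lintegral_le hq hF
    _ = ∫⁻ z, G z * (⨍⁻ y in ball (x - z) r, g y ^ q ∂volume) ^ (1 / q) := by
        refine lintegral_congr fun z => ?_
        have hgz : Measurable fun y => g (y - z) := hg.comp (measurable_sub_const z)
        rw [rpow_laverage_mul_rpow _ (one_pos.trans_le hq) _ hgz,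
          setLAverage_ball_comp_sub_right volume (fun y => g y ^ q)]
    _ ≤ ∫⁻ z, G z * maximalFn n q g (x - z) := by
        gcongr with z
        rw [maximalFn_eq_iSup_setLAverage]
        exact le_iSup₂_of_le r hr le_rfl
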